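/- arXiv:1602.04960 — 2 statements merged into one kernel-verified Lean document; each statement's English description precedes it below -/
import Mathlib

section
/- Let F : [0,1] → [0,1] be a distribution function with F(0) = 0 and F(1) = 1 (i.e., F is right-continuous and non-decreasing), and let F* be its pseudo-inverse defined by F*(u) = inf{x ∈ [0,1] : F(x) ≥ u}. Then sup_{u∈[0,1]} |F*(u) − u| ≤ sup_{x∈[0,1]} |F(x) − x|. -/
/-!
Let `m = F* u` and `S = sup |F x - x|`. Right-continuity at the infimum gives `u ≤ F m`, so
`u - m ≤ F m - m ≤ S`. Conversely `F (u + S) ≥ (u + S) - S = u`, so `u + S` competes in the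
infimum and `m ≤ u + S` (when `u + S > 1`, already `m ≤ 1 < u + S`).
-/

open Set Filter Topology

theorem le_apply_csInf_of_forall_mem_le {α β : Type*} [ConditionallyCompleteLinearOrder α]
    [TopologicalSpace α] [OrderTopology α] [TopologicalSpace β] [Preorder β]
    [ClosedIciTopology β] {F : α → β} {A : Set α} {u : β} (hne : A.Nonempty) (hbdd : BddBelow A)
    (hrc : ContinuousWithinAt F (Ici (sInf A)) (sInf A)) (hA : ∀ x ∈ A, u ≤ F x) :
    u ≤ F (sInf A) := by
  have : (𝓝[A] sInf A).NeBot :=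
    mem_closure_iff_nhdsWithin_neBot.mp (csInf_mem_closure hne hbdd)
  exact ge_of_tendsto (hrc.mono_left (nhdsWithin_mono _ fun x hx => csInf_le hbdd hx))
    (eventually_nhdsWithin_of_forall hA)

theorem bddAbove_image_abs_sub_self_of_mapsTo {F : ℝ → ℝ} {a b : ℝ}
    (hF : MapsTo F (Icc a b) (Icc a b)) : BddAbove ((fun x => |F x - x|) '' Icc a b) := by
  refine ⟨b - a, ?_⟩
  rintro _ ⟨x, hx, rfl⟩
  exact abs_sub_le_of_le_of_le (hF hx).1 (hF hx).2 hx.1 hx.2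

theorem pseudoInverse_dist_to_id_le_general (F : ℝ → ℝ)
    (hrc : ∀ x ∈ Icc (0:ℝ) 1, ContinuousWithinAt F (Ici x) x)
    (hrange : ∀ x ∈ Icc (0:ℝ) 1, F x ∈ Icc (0:ℝ) 1)
    (hF1 : F 1 = 1) :
    ∀ u ∈ Icc (0:ℝ) 1,
      |sInf {x ∈ Icc (0:ℝ) 1 | u ≤ F x} - u| ≤ sSup ((fun x => |F x - x|) '' Icc 0 1) := by
  intro u hu
  set A := {x ∈ Icc (0:ℝ) 1 | u ≤ F x}
  set S := sSup ((fun x => |F x - x|) '' Icc 0 1)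
  have hle : ∀ x ∈ Icc (0:ℝ) 1, |F x - x| ≤ S := fun x hx =>
    le_csSup (bddAbove_image_abs_sub_self_of_mapsTo hrange) (mem_image_of_mem _ hx)
  have h1A : (1:ℝ) ∈ A := ⟨right_mem_Icc.2 zero_le_one, hF1.symm ▸ hu.2⟩
  have hbdd : BddBelow A := ⟨0, fun x hx => hx.1.1⟩
  have hmI : sInf A ∈ Icc (0:ℝ) 1 := ⟨le_csInf ⟨1, h1A⟩ fun x hx => hx.1.1, csInf_le hbdd h1A⟩
  have hFm : u ≤ F (sInf A) :=
    le_apply_csInf_of_forall_mem_le ⟨1, h1A⟩ hbdd (hrc _ hmI) fun x hx => hx.2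
  have hm_le : sInf A ≤ u + S := by
    rcases le_or_gt 1 (u + S) with h | h
    · exact hmI.2.trans h
    · have hS0 : 0 ≤ S := (abs_nonneg _).trans (hle 0 (left_mem_Icc.2 zero_le_one))
      have huS : u + S ∈ Icc (0:ℝ) 1 := ⟨by linarith [hu.1], h.le⟩
      refine csInf_le hbdd ⟨huS, ?_⟩
      linarith [neg_abs_le (F (u + S) - (u + S)), hle _ huS]
  rw [abs_le]
  constructor <;> linarith [le_abs_self (F (sInf A) - sInf A), hle _ hmI]

/-- Let `F : [0,1] → [0,1]` be a distribution function with `F 0 = 0` and `F 1 = 1`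
(non-decreasing and right-continuous on `[0,1]`), and let `F*` be its pseudo-inverse
`F* u = inf {x ∈ [0,1] | F x ≥ u}`. Then `sup |F* u - u| ≤ sup |F x - x|` over `[0,1]`. -/
theorem pseudoInverse_dist_to_id_le (F : ℝ → ℝ)
    (hmono : MonotoneOn F (Icc 0 1))
    (hrc : ∀ x ∈ Icc (0:ℝ) 1, ContinuousWithinAt F (Ici x) x)
    (hrange : ∀ x ∈ Icc (0:ℝ) 1, F x ∈ Icc (0:ℝ) 1)
    (hF0 : F 0 = 0) (hF1 : F 1 = 1) :
    ∀ u ∈ Icc (0:ℝ) 1,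
      |sInf {x ∈ Icc (0:ℝ) 1 | u ≤ F x} - u| ≤ sSup ((fun x => |F x - x|) '' Icc 0 1) :=
  pseudoInverse_dist_to_id_le_general F hrc hrange hF1
end

section
/- Let σ be a permutation of size n and let ρ ∈ S_K and π_1,…,π_r be permutations with sizes summing to K. Let S_ρ be the set of tuples (s_1,…,s_r) of subsets of [n] with |s_i| = |π_i|, pat_{s_i}(σ) = π_i for all i, and pat_I(σ) = ρ where I = s_1 ∪ ⋯ ∪ s_r (in particular |I| = K). Then |S_ρ| = d^ρ_{π_1,…,π_r} · (number of K-element subsets I ⊆ [n] with pat_I(σ) = ρ), where d^ρ_{π_1,…,π_r} is the number of ordered set-partitions (I_1,…,I_r) of [K] with |I_i| = |π_i| and pat_{I_i}(ρ) = π_i for all i. -/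
/-- Subsequence of a list given by a set of (0-indexed) positions. -/
def subseqAt (l : List ℕ) (I : Finset ℕ) : List ℕ :=
  ((List.range l.length).filter (· ∈ I)).map (fun i => l.getD i 0)

/-- Standardization of a list of distinct values: each value is replaced by its rank
(1-indexed) among the values of the list. -/
def List.std (l : List ℕ) : List ℕ := l.map (fun x => (l.filter (· < x)).length + 1)

/-- The pattern of the permutation `l` (one-line notation) induced by the set `I`
of (0-indexed) positions. -/
def patL (l : List ℕ) (I : Finset ℕ) : List ℕ := (subseqAt l I).std

/-! Group the tuples `(s_i)` by their union `I`: only occurrences `I` of `ρ` contribute, and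
the increasing bijection `e : [K] → I` identifies the tuples with union `I` with the
set-partitions `(I_i)` of `[K]` counted by `d^ρ`, via `s_i = e(I_i)`. This works because patterns
compose, `pat_{e(Q)}(σ) = pat_Q(pat_I(σ))`, and because `∑ |π_i| = K` forces blocks with union
`[K]` to be disjoint. -/

open Finset

theorem Finset.sort_image_of_strictMonoOn {α β : Type*} [LinearOrder α] [LinearOrder β]
    {f : α → β} {s : Finset α} (hf : StrictMonoOn f s) : (s.image f).sort = s.sort.map f := by
  have hl : (s.sort.map f).Pairwise (· < ·) :=
    List.pairwise_map.mpr <| (s.sortedLT_sort.pairwise).imp_of_mem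
      fun ha hb hab => hf (by simpa using ha) (by simpa using hb) hab
  have himage : (s.sort.map f).toFinset = s.image f := by ext; simp
  rw [← himage, (List.toFinset_sort _ hl.nodup).mpr (hl.imp le_of_lt)]

theorem List.filter_range_mem_eq_sort {n : ℕ} {I : Finset ℕ} (hI : ∀ i ∈ I, i < n) :
    (List.range n).filter (· ∈ I) = I.sort := by
  have hl : ((List.range n).filter (· ∈ I)).Pairwise (· < ·) :=
    List.pairwise_lt_range.filter _
  have hI' : ((List.range n).filter (· ∈ I)).toFinset = I := by
    ext i; simpa using fun hi => hI i hi
  rw [← (List.toFinset_sort _ hl.nodup).mpr (hl.imp le_of_lt), hI']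

theorem subseqAt_eq_map_sort {l : List ℕ} {I : Finset ℕ} (hI : ∀ i ∈ I, i < l.length) :
    subseqAt l I = I.sort.map (l.getD · 0) := by
  rw [subseqAt, List.filter_range_mem_eq_sort hI]

theorem subseqAt_map (l : List ℕ) (f : ℕ → ℕ) (I : Finset ℕ) :
    subseqAt (l.map f) I = (subseqAt l I).map f := by
  simp only [subseqAt, List.length_map, List.map_map]
  refine List.map_congr_left fun i hi => ?_
  have hil : i < l.length := by simpa using (List.mem_filter.mp hi).1
  simp [List.getElem?_eq_getElem hil]

theorem List.std_map_of_strictMonoOn {m : List ℕ} {f : ℕ → ℕ} (hf : StrictMonoOn f {x | x ∈ m}) :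
    (m.map f).std = m.std := by
  simp only [List.std, List.map_map, List.filter_map, List.length_map]
  refine List.map_congr_left fun x hx => ?_
  simp only [Function.comp_apply]
  congr 2
  exact List.filter_congr fun y hy => by simp [hf.lt_iff_lt hy hx]

theorem List.strictMonoOn_length_filter_lt (m : List ℕ) :
    StrictMonoOn (fun x => (m.filter (· < x)).length) {x | x ∈ m} := by
  intro x hx y _ hxy
  have hsub : (m.filter (· < x)).Sublist (m.filter (· < y)) :=
    List.monotone_filter_right m fun z hz => by
      simp only [decide_eq_true_eq] at hz ⊢
      omega
  refine lt_of_le_of_ne hsub.length_le fun hlen => ?_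
  have : x ∈ m.filter (· < y) := by simpa using ⟨hx, hxy⟩
  rw [← hsub.eq_of_length hlen] at this
  simp at this

theorem mem_of_mem_subseqAt {l : List ℕ} {I : Finset ℕ} {x : ℕ} (hx : x ∈ subseqAt l I) :
    x ∈ l := by
  obtain ⟨i, hi, rfl⟩ := List.mem_map.mp hx
  have hil : i < l.length := by simpa using (List.mem_filter.mp hi).1
  simp [List.getElem?_eq_getElem hil]

theorem patL_std (l : List ℕ) (I : Finset ℕ) : patL l.std I = patL l I := by
  show (subseqAt (l.map _) I).std = _
  rw [subseqAt_map]
  exact List.std_map_of_strictMonoOn fun x hx y hy hxy => Nat.succ_lt_succ <|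
    List.strictMonoOn_length_filter_lt l (mem_of_mem_subseqAt hx) (mem_of_mem_subseqAt hy) hxy

theorem Finset.getD_sort_mem {I : Finset ℕ} {k : ℕ} (hk : k < I.card) : I.sort.getD k 0 ∈ I := by
  rw [List.getD_eq_getElem _ 0 (by simpa using hk)]
  exact (mem_sort _).mp (List.getElem_mem _)

theorem Finset.strictMonoOn_getD_sort (I : Finset ℕ) :
    StrictMonoOn (I.sort.getD · 0) {k | k < I.card} := by
  intro a ha b hb hab
  have ha' : a < I.sort.length := by simpa using ha
  have hb' : b < I.sort.length := by simpa using hb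
  simp only [List.getD_eq_getElem _ 0 ha', List.getD_eq_getElem _ 0 hb']
  exact I.sortedLT_sort.strictMono_get (show (⟨a, ha'⟩ : Fin _) < ⟨b, hb'⟩ from hab)

theorem subseqAt_subseqAt {l : List ℕ} {I Q : Finset ℕ} (hI : ∀ i ∈ I, i < l.length)
    (hQ : ∀ k ∈ Q, k < I.card) :
    subseqAt (subseqAt l I) Q = subseqAt l (Q.image (I.sort.getD · 0)) := by
  have hQI : ∀ i ∈ Q.image (I.sort.getD · 0), i < l.length := by
    simp only [mem_image, forall_exists_index, and_imp, forall_apply_eq_imp_iff₂]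
    exact fun k hk => hI _ (getD_sort_mem (hQ k hk))
  rw [subseqAt_eq_map_sort hI, subseqAt_map, subseqAt_eq_map_sort (by simpa using hQ),
    subseqAt_eq_map_sort hQI, sort_image_of_strictMonoOn
      ((strictMonoOn_getD_sort I).mono fun k hk => hQ k hk), List.map_map]

theorem patL_patL {l : List ℕ} {I Q : Finset ℕ} (hI : ∀ i ∈ I, i < l.length)
    (hQ : ∀ k ∈ Q, k < I.card) :
    patL (patL l I) Q = patL l (Q.image (I.sort.getD · 0)) := by
  show patL (subseqAt l I).std Q = _
  rw [patL_std]
  exact congrArg List.std (subseqAt_subseqAt hI hQ)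

theorem val_orderEmbOfFin_eq_getD_sort {n K : ℕ} (I : Finset (Fin n)) (hI : I.card = K)
    (k : Fin K) :
    (I.orderEmbOfFin hI k : ℕ) = (I.image Fin.val).sort.getD k 0 := by
  rw [sort_image_of_strictMonoOn (Fin.val_strictMono.strictMonoOn _),
    List.getD_eq_getElem _ _ (by simp [hI]), List.getElem_map, orderEmbOfFin_apply]
  rfl

theorem patL_image_map_orderEmbOfFin {n K : ℕ} {l : List ℕ} (hl : l.length = n)
    (I : Finset (Fin n)) (hI : I.card = K) (Q : Finset (Fin K)) :
    patL l ((Q.map (I.orderEmbOfFin hI).toEmbedding).image Fin.val) =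
      patL (patL l (I.image Fin.val)) (Q.image Fin.val) := by
  rw [patL_patL (by simp [hl]) (by simp [card_image_of_injective _ Fin.val_injective, hI]),
    map_eq_image, image_image, image_image]
  congr 2
  funext k
  exact val_orderEmbOfFin_eq_getD_sort I hI k

theorem length_patL_image_val {n : ℕ} {l : List ℕ} (hl : l.length = n) (I : Finset (Fin n)) :
    (patL l (I.image Fin.val)).length = #I := by
  rw [patL, List.std, List.length_map, subseqAt_eq_map_sort (by simp [hl]), List.length_map,
    length_sort, card_image_of_injective _ Fin.val_injective]

theorem Finset.disjoint_of_card_biUnion_eq_sum {ι α : Type*} [DecidableEq α] {s : Finset ι}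
    {t : ι → Finset α} (h : #(s.biUnion t) = ∑ k ∈ s, #(t k)) {i j : ι} (hi : i ∈ s)
    (hj : j ∈ s) (hij : i ≠ j) : Disjoint (t i) (t j) := by
  classical
  set u := (s.erase i).erase j
  have hsum : ∑ k ∈ s, #(t k) = #(t i) + #(t j) + ∑ k ∈ u, #(t k) := by
    rw [← add_sum_erase _ _ hi, ← add_sum_erase _ _ (mem_erase.mpr ⟨hij.symm, hj⟩), add_assoc]
  have hsub : s.biUnion t ⊆ (t i ∪ t j) ∪ u.biUnion t := by
    intro x hx
    obtain ⟨k, hk, hxk⟩ := mem_biUnion.mp hx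
    grind
  have hle := (card_le_card hsub).trans ((card_union_le _ _).trans
    (Nat.add_le_add_left card_biUnion_le _))
  exact card_union_eq_card_add_card.mp (le_antisymm (card_union_le _ _) (by omega))

theorem filter_biUnion_eq_map_orderEmbOfFin {n K r : ℕ} {σ ρ : List ℕ} {π : Fin r → List ℕ}
    (hσ : σ.length = n) (hK : ∑ i, (π i).length = K)
    {I : Finset (Fin n)} (hI : #I = K) (hIρ : patL σ (I.image Fin.val) = ρ) :
    ({s : Fin r → Finset (Fin n) | ((∀ i, #(s i) = (π i).length) ∧
        (∀ i, patL σ ((s i).image Fin.val) = π i) ∧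
        patL σ ((univ.biUnion s).image Fin.val) = ρ) ∧ univ.biUnion s = I} : Finset _) =
      Finset.map (Function.Embedding.piCongrRight fun _ =>
          (mapEmbedding (I.orderEmbOfFin hI).toEmbedding).toEmbedding)
        {P : Fin r → Finset (Fin K) | (∀ i j, i ≠ j → Disjoint (P i) (P j)) ∧
          univ.biUnion P = univ ∧ (∀ i, #(P i) = (π i).length) ∧
          ∀ i, patL ρ ((P i).image Fin.val) = π i} := by
  set e := (I.orderEmbOfFin hI).toEmbedding
  have hpat (Q : Finset (Fin K)) :
      patL σ ((Q.map e).image Fin.val) = patL ρ (Q.image Fin.val) := by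
    rw [patL_image_map_orderEmbOfFin hσ, hIρ]
  have hunion (P : Fin r → Finset (Fin K)) :
      univ.biUnion (fun i => (P i).map e) = I ↔ univ.biUnion P = univ := by
    have : univ.biUnion (fun i => (P i).map e) = (univ.biUnion P).map e := by
      simp only [map_eq_image, biUnion_image]
    rw [this, ← map_orderEmbOfFin_univ I hI, map_inj]
  ext s
  simp only [mem_filter, mem_univ, true_and, mem_map]
  constructor
  · rintro ⟨⟨hcard, hspat, -⟩, hs⟩
    have hsub (i : Fin r) : s i ⊆ univ.map e := by
      rw [map_orderEmbOfFin_univ, ← hs]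
      exact subset_biUnion_of_mem s (mem_univ i)
    choose P hP using fun i => subset_map_iff.mp (hsub i)
    obtain rfl : s = fun i => (P i).map e := funext fun i => (hP i).2
    have hcover := (hunion P).mp hs
    have hcardP (i : Fin r) : #(P i) = (π i).length := by rw [← card_map e, hcard]
    have hsum : #(univ.biUnion P) = ∑ i, #(P i) := by
      rw [hcover, card_fin, sum_congr rfl fun i _ => hcardP i, hK]
    exact ⟨P, ⟨fun i j => disjoint_of_card_biUnion_eq_sum hsum (mem_univ i) (mem_univ j),
      hcover, hcardP, fun i => by rw [← hpat, hspat]⟩, rfl⟩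
  · rintro ⟨P, ⟨-, hcover, hcard, hPpat⟩, hP⟩
    obtain rfl : s = fun i => (P i).map e := hP.symm
    have hs := (hunion P).mpr hcover
    exact ⟨⟨fun i => by rw [card_map, hcard], fun i => by rw [hpat, hPpat], by rw [hs, hIρ]⟩, hs⟩

theorem card_S_rho_eq_d_mul_occurrences_general
    (n K r : ℕ) (σ ρ : List ℕ) (π : Fin r → List ℕ)
    (hσ : σ.Perm (List.range' 1 n)) (hρ : ρ.Perm (List.range' 1 K))
    (hK : ∑ i, (π i).length = K) :
    Nat.card {s : Fin r → Finset (Fin n) //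
        (∀ i, (s i).card = (π i).length) ∧
        (∀ i, patL σ ((s i).image Fin.val) = π i) ∧
        patL σ ((Finset.univ.biUnion s).image Fin.val) = ρ} =
      Nat.card {P : Fin r → Finset (Fin K) //
        (∀ i j, i ≠ j → Disjoint (P i) (P j)) ∧
        Finset.univ.biUnion P = Finset.univ ∧
        (∀ i, (P i).card = (π i).length) ∧
        (∀ i, patL ρ ((P i).image Fin.val) = π i)} *
      Nat.card {I : Finset (Fin n) // I.card = K ∧ patL σ (I.image Fin.val) = ρ} := by
  have hσlen : σ.length = n := by simpa using hσ.length_eq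
  have hρlen : ρ.length = K := by simpa using hρ.length_eq
  simp only [Nat.card_eq_fintype_card, Fintype.card_subtype]
  refine (card_eq_sum_card_fiberwise (f := fun s => univ.biUnion s)
    (t := {I | #I = K ∧ patL σ (I.image Fin.val) = ρ}) ?_).trans
    ((sum_const_nat fun I hI => ?_).trans (mul_comm _ _))
  · intro s hs
    have hIρ := (mem_filter.mp hs).2.2.2
    exact mem_filter.mpr ⟨mem_univ _, by rw [← hρlen, ← hIρ, length_patL_image_val hσlen], hIρ⟩
  · obtain ⟨hI, hIρ⟩ := (mem_filter.mp hI).2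
    rw [filter_filter, filter_biUnion_eq_map_orderEmbOfFin hσlen hK hI hIρ, card_map]

/-- Let `σ ∈ S_n`, `ρ ∈ S_K` and `π_1,…,π_r` with sizes summing to `K`. The number of
tuples `(s_1,…,s_r)` of subsets of `[n]` with `pat_{s_i}(σ) = π_i` for all `i` and
`pat_{s_1 ∪ ⋯ ∪ s_r}(σ) = ρ` equals `d^ρ_{π_1,…,π_r}` times the number of `K`-element
subsets `I ⊆ [n]` with `pat_I(σ) = ρ`, where `d^ρ_{π_1,…,π_r}` is the number of ordered
set-partitions `(I_1,…,I_r)` of `[K]` with `|I_i| = |π_i|` and `pat_{I_i}(ρ) = π_i`. -/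
theorem card_S_rho_eq_d_mul_occurrences
    (n K r : ℕ) (σ ρ : List ℕ) (π : Fin r → List ℕ)
    (hσ : σ.Perm (List.range' 1 n)) (hρ : ρ.Perm (List.range' 1 K))
    (hπ : ∀ i, (π i).Perm (List.range' 1 (π i).length))
    (hK : ∑ i, (π i).length = K) :
    Nat.card {s : Fin r → Finset (Fin n) //
        (∀ i, (s i).card = (π i).length) ∧
        (∀ i, patL σ ((s i).image Fin.val) = π i) ∧
        patL σ ((Finset.univ.biUnion s).image Fin.val) = ρ} =
      Nat.card {P : Fin r → Finset (Fin K) //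
        (∀ i j, i ≠ j → Disjoint (P i) (P j)) ∧
        Finset.univ.biUnion P = Finset.univ ∧
        (∀ i, (P i).card = (π i).length) ∧
        (∀ i, patL ρ ((P i).image Fin.val) = π i)} *
      Nat.card {I : Finset (Fin n) // I.card = K ∧ patL σ (I.image Fin.val) = ρ} :=
  card_S_rho_eq_d_mul_occurrences_general n K r σ ρ π hσ hρ hK
end
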